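/- Computing A(1,n,k) via the halving recursion A(i,j,q) = min_m [A(i,m,⌊q/2⌋) + A(m+1,j,⌈q/2⌉) + C(i,m,j)] only requires values A(·,·,q) for q in the set S = {⌊k/2^l⌋ : l ≥ 0} ∪ {⌈k/2^l⌉ : l ≥ 0}, and this set S has cardinality O(log k); more precisely, the set {⌊k/2^l⌋, ⌈k/2^l⌉ : 0 ≤ l ≤ ⌈log₂ k⌉} is closed under the operations q ↦ ⌊q/2⌋ and q ↦ ⌈q/2⌉ and has at most 2(⌈log₂ k⌉ + 1) elements. -/

import Mathlib

/-!
Writing `⌊k/2^l⌋ ≤ q ≤ ⌈k/2^l⌉`, both halvings of `q` satisfy the same bounds with `l + 1` in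
place of `l`, and since `⌈k/2^l⌉ ≤ ⌊k/2^l⌋ + 1` every integer in that range is one of the two
roundings. A value `q ≥ 2` forces `2^l < k`, so `l + 1` stays within the range `l ≤ ⌈log₂ k⌉`;
the values `q ≤ 1` are fixed by `q ↦ ⌈q/2⌉`.
-/

open Finset

namespace Nat

lemma div_le_ceilDiv (k m : ℕ) : k / m ≤ k ⌈/⌉ m := by
  rcases m.eq_zero_or_pos with rfl | hm
  · simp
  · rw [ceilDiv_eq_add_pred_div]
    exact Nat.div_le_div_right (by omega)

lemma ceilDiv_le_div_add_one (k m : ℕ) : k ⌈/⌉ m ≤ k / m + 1 := by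
  rcases m.eq_zero_or_pos with rfl | hm
  · simp
  · exact (ceilDiv_le_iff_le_mul hm).2 (lt_mul_div_succ k hm).le

lemma halves_mem_Icc {k m q : ℕ} (hm : 0 < m) (hq : q ∈ Set.Icc (k / m) (k ⌈/⌉ m)) :
    q / 2 ∈ Set.Icc (k / (2 * m)) (k ⌈/⌉ (2 * m)) ∧
      (q + 1) / 2 ∈ Set.Icc (k / (2 * m)) (k ⌈/⌉ (2 * m)) := by
  obtain ⟨hlo, hhi⟩ := hq
  have hfloor : k / (2 * m) ≤ q / 2 := by
    rw [mul_comm, ← Nat.div_div_eq_div_mul]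
    exact Nat.div_le_div_right hlo
  have hceil : k ⌈/⌉ m ≤ 2 * (k ⌈/⌉ (2 * m)) := by
    rw [ceilDiv_le_iff_le_mul hm, ← mul_assoc, mul_comm m 2,
      ← ceilDiv_le_iff_le_mul (by omega)]
  simp only [Set.mem_Icc]
  omega

end Nat

def dyadicRoundings (k L : ℕ) : Finset ℕ :=
  (range (L + 1)).image (fun l => k / 2 ^ l) ∪ (range (L + 1)).image (fun l => k ⌈/⌉ 2 ^ l)

lemma mem_dyadicRoundings_iff {k L q : ℕ} :
    q ∈ dyadicRoundings k L ↔ ∃ l ≤ L, q ∈ Set.Icc (k / 2 ^ l) (k ⌈/⌉ 2 ^ l) := by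
  simp only [dyadicRoundings, mem_union, mem_image, mem_range, Nat.lt_succ_iff, Set.mem_Icc]
  constructor
  · rintro (⟨l, hl, rfl⟩ | ⟨l, hl, rfl⟩)
    · exact ⟨l, hl, le_rfl, Nat.div_le_ceilDiv k _⟩
    · exact ⟨l, hl, Nat.div_le_ceilDiv k _, le_rfl⟩
  · rintro ⟨l, hl, hlo, hhi⟩
    have := Nat.ceilDiv_le_div_add_one k (2 ^ l)
    rcases (by omega : q = k / 2 ^ l ∨ q = k ⌈/⌉ 2 ^ l) with rfl | rfl
    exacts [Or.inl ⟨l, hl, rfl⟩, Or.inr ⟨l, hl, rfl⟩]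

lemma self_mem_dyadicRoundings (k L : ℕ) : k ∈ dyadicRoundings k L :=
  mem_dyadicRoundings_iff.2 ⟨0, L.zero_le, by simp⟩

lemma card_dyadicRoundings_le (k L : ℕ) : (dyadicRoundings k L).card ≤ 2 * (L + 1) :=
  calc (dyadicRoundings k L).card
      ≤ (range (L + 1)).card + (range (L + 1)).card :=
        (card_union_le _ _).trans (add_le_add card_image_le card_image_le)
    _ = 2 * (L + 1) := by rw [card_range, two_mul]

lemma halves_mem_dyadicRoundings {k L q : ℕ} (hL : k ≤ 2 ^ L) (hq : q ∈ dyadicRoundings k L)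
    (h2 : 2 ≤ q) :
    q / 2 ∈ dyadicRoundings k L ∧ (q + 1) / 2 ∈ dyadicRoundings k L := by
  obtain ⟨l, -, hql⟩ := mem_dyadicRoundings_iff.1 hq
  have hlt : 2 ^ l < k := by
    by_contra! hk
    have : k ⌈/⌉ 2 ^ l ≤ 1 := (ceilDiv_le_iff_le_mul (by positivity)).2 (by simpa using hk)
    exact absurd (h2.trans hql.2) (by omega)
  have hl : l + 1 ≤ L := (Nat.pow_lt_pow_iff_right one_lt_two).1 (hlt.trans_le hL)
  have halves := Nat.halves_mem_Icc (by positivity) hql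
  rw [← pow_succ'] at halves
  exact ⟨mem_dyadicRoundings_iff.2 ⟨l + 1, hl, halves.1⟩, mem_dyadicRoundings_iff.2 ⟨l + 1, hl, halves.2⟩⟩

theorem stmt3_general (k : ℕ) (S : Finset ℕ)
    (hS : S = (Finset.range (Nat.clog 2 k + 1)).image (fun l => k / 2 ^ l)
        ∪ (Finset.range (Nat.clog 2 k + 1)).image (fun l => (k + 2 ^ l - 1) / 2 ^ l)) :
    k ∈ S
    ∧ (∀ q ∈ S, (1 ≤ q → (q + 1) / 2 ∈ S) ∧ (2 ≤ q → q / 2 ∈ S))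
    ∧ S.card ≤ 2 * (Nat.clog 2 k + 1) := by
  -- on `ℕ`, `k ⌈/⌉ m` is by definition `(k + m - 1) / m`
  change S = dyadicRoundings k (Nat.clog 2 k) at hS
  subst hS
  have hL : k ≤ 2 ^ Nat.clog 2 k := Nat.le_pow_clog one_lt_two k
  refine ⟨self_mem_dyadicRoundings _ _, fun q hq => ⟨fun h1 => ?_, fun h2 =>
    (halves_mem_dyadicRoundings hL hq h2).1⟩, card_dyadicRoundings_le _ _⟩
  rcases h1.eq_or_lt with rfl | h2
  · exact hq
  · exact (halves_mem_dyadicRoundings hL hq h2).2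

/-- The set `S = {⌊k/2^l⌋, ⌈k/2^l⌉ : 0 ≤ l ≤ ⌈log₂ k⌉}` contains `k`, is closed under
`q ↦ ⌈q/2⌉` (for `q ≥ 1`) and `q ↦ ⌊q/2⌋` (for `q ≥ 2`), and has at most
`2(⌈log₂ k⌉ + 1)` elements; hence the halving recursion for `A(1,n,k)` only needs the
`O(log k)` values `A(·,·,q)` with `q ∈ S`. -/
theorem stmt3 (k : ℕ) (hk : 1 ≤ k) (S : Finset ℕ)
    (hS : S = (Finset.range (Nat.clog 2 k + 1)).image (fun l => k / 2 ^ l)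
        ∪ (Finset.range (Nat.clog 2 k + 1)).image (fun l => (k + 2 ^ l - 1) / 2 ^ l)) :
    k ∈ S
    ∧ (∀ q ∈ S, (1 ≤ q → (q + 1) / 2 ∈ S) ∧ (2 ≤ q → q / 2 ∈ S))
    ∧ S.card ≤ 2 * (Nat.clog 2 k + 1) :=
  stmt3_general k S hS
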